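/- Let T be a rooted bifurcating tree with n = κ(T) ≥ 1 leaves. Then C(T) = 0 if and only if n is a power of 2 and T = B_n. -/
import Mathlib


/-- The Colless index of the maximally balanced bifurcating tree with `n` leaves:
`c 1 = 0` and `c n = c ⌈n/2⌉ + c ⌊n/2⌋ + (⌈n/2⌉ - ⌊n/2⌋)` for `n ≥ 2`. -/
def c : ℕ → ℕ
  | 0 => 0
  | 1 => 0
  | n + 2 => c ((n + 3) / 2) + c ((n + 2) / 2) + ((n + 3) / 2 - (n + 2) / 2)
decreasing_by all_goals omega

/-- Rooted bifurcating trees: full binary trees built from single-node leaves by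
the root join operation. -/
inductive BTree : Type
  | leaf : BTree
  | node : BTree → BTree → BTree
deriving DecidableEq

/-- The number of leaves of a rooted bifurcating tree. -/
def kappa : BTree → ℕ
  | .leaf => 1
  | .node t₁ t₂ => kappa t₁ + kappa t₂

/-- The Colless index of a rooted bifurcating tree:
`C(leaf) = 0` and `C(T₁ ⋆ T₂) = C(T₁) + C(T₂) + |κ(T₁) - κ(T₂)|`. -/
def colless : BTree → ℕ
  | .leaf => 0
  | .node t₁ t₂ => colless t₁ + colless t₂ + Nat.dist (kappa t₁) (kappa t₂)

/-- The maximally balanced tree with `n` leaves: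
`B 1 = leaf` and `B n = B ⌈n/2⌉ ⋆ B ⌊n/2⌋` for `n ≥ 2`. -/
def B : ℕ → BTree
  | 0 => .leaf
  | 1 => .leaf
  | n + 2 => .node (B ((n + 3) / 2)) (B ((n + 2) / 2))
decreasing_by all_goals omega

lemma kappa_pos (T : BTree) : 1 ≤ kappa T := by
  induction T with
  | leaf => simp [kappa]
  | node t₁ t₂ h₁ h₂ => simp [kappa]; omega

lemma B_two_mul (m : ℕ) (hm : 1 ≤ m) : B (2 * m) = .node (B m) (B m) := by
  obtain ⟨p, rfl⟩ : ∃ p, m = p + 1 := ⟨m - 1, by omega⟩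
  have h : 2 * (p + 1) = p * 2 + 2 := by ring
  rw [h, B]
  congr 1 <;> congr 1 <;> omega

lemma colless_B_pow (k : ℕ) : colless (B (2 ^ k)) = 0 := by
  induction k with
  | zero => simp [B, colless]
  | succ k ih =>
    have : (2 : ℕ) ^ (k + 1) = 2 * 2 ^ k := by ring
    rw [this, B_two_mul _ (Nat.one_le_two_pow), colless, ih, Nat.dist_self]

lemma colless_zero_forward (T : BTree) (h : colless T = 0) :
    (∃ k, kappa T = 2 ^ k) ∧ T = B (kappa T) := by
  induction T with
  | leaf => exact ⟨⟨0, rfl⟩, by simp [kappa, B]⟩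
  | node t₁ t₂ ih₁ ih₂ =>
    rw [colless] at h
    have h₁ : colless t₁ = 0 := by omega
    have h₂ : colless t₂ = 0 := by omega
    have hd : Nat.dist (kappa t₁) (kappa t₂) = 0 := by omega
    have heq : kappa t₁ = kappa t₂ := Nat.eq_of_dist_eq_zero hd
    obtain ⟨⟨k, hk⟩, hB₁⟩ := ih₁ h₁
    obtain ⟨⟨k', hk'⟩, hB₂⟩ := ih₂ h₂
    have hκ : kappa (t₁.node t₂) = 2 * kappa t₁ := by rw [kappa]; omega
    refine ⟨⟨k + 1, by rw [hκ, hk]; ring⟩, ?_⟩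
    rw [hκ, B_two_mul _ (kappa_pos t₁)]
    rw [← heq] at hB₂
    exact congrArg₂ BTree.node hB₁ hB₂

/-- A rooted bifurcating tree with `n` leaves has Colless index `0` if and only
if `n` is a power of `2` and the tree is the maximally balanced tree `B n`. -/
theorem colless_eq_zero_iff (T : BTree) (n : ℕ) (hn : kappa T = n) (h1 : 1 ≤ n) :
    colless T = 0 ↔ (∃ k : ℕ, n = 2 ^ k) ∧ T = B n := by
  subst hn
  constructor
  · exact colless_zero_forward T
  · rintro ⟨⟨k, hk⟩, hT⟩
    rw [hk] at hT
    rw [hT]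
    exact colless_B_pow k
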